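/- arXiv:gr-qc/0201091 — 6 statements merged into one kernel-verified Lean document; each statement's English description precedes it below -/
import Mathlib

section
/- For every (μ, j) ∈ I there exists (ρ, v) ∈ D such that Φ(ρ, v) = (μ, j). (Surjectivity step in the proof of Theorem 4.3, obtained via Brouwer's fixed-point theorem.) -/
/-!
Since `(ρ + p v²) - (ρ + p) v² = ρ (1 - v²)`, the equation `Φ (ρ, v) = (μ, j)` forces `ρ = μ - j v`,
and then reduces to the scalar equation `v (μ + p (μ - j v)) = j`. Its left side is `0` at `v = 0`
and at least `j` at `v = j / μ`, so the intermediate value theorem (Brouwer in dimension one)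
solves it on `[0, j / μ]`. On that interval `μ - j v ≥ μ - j² / μ ≥ ρ₀`, because
`μ₀(j) ≤ μ` means exactly `j² ≤ μ (μ - ρ₀)`, and `v ≤ j / μ < 1`.
-/

open Set

/-- `a / 2 + √(a² / 4 + j²)` is the larger root of `μ² - a μ - j²`. -/
lemma half_add_sqrt_le_iff {a j μ : ℝ} :
    a / 2 + √(a ^ 2 / 4 + j ^ 2) ≤ μ ↔ a / 2 ≤ μ ∧ j ^ 2 ≤ μ * (μ - a) := by
  rw [← le_sub_iff_add_le', Real.sqrt_le_iff, sub_nonneg]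
  exact and_congr_right fun _ => by constructor <;> intro h <;> nlinarith

lemma exists_mem_Icc_mul_add_eq {q : ℝ → ℝ} {μ j : ℝ} (hμ : 0 < μ) (hj : 0 ≤ j)
    (hq : ContinuousOn q (Icc 0 (j / μ))) (hq_nonneg : ∀ v ∈ Icc 0 (j / μ), 0 ≤ q v) :
    ∃ v ∈ Icc 0 (j / μ), v * (μ + q v) = j := by
  have hjμ : 0 ≤ j / μ := div_nonneg hj hμ.le
  have hcont : ContinuousOn (fun v => v * (μ + q v)) (Icc 0 (j / μ)) :=
    continuousOn_id.mul (continuousOn_const.add hq)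
  refine intermediate_value_Icc hjμ hcont ⟨by simpa using hj, ?_⟩
  have hq_end := hq_nonneg (j / μ) ⟨hjμ, le_rfl⟩
  calc j = j / μ * μ := (div_mul_cancel₀ j hμ.ne').symm
    _ ≤ j / μ * (μ + q (j / μ)) := by gcongr; linarith

lemma div_one_sub_sq_eq_of_eq_mul_add {μ j v P : ℝ} (hv : v ^ 2 ≠ 1) (h : j = v * (μ + P)) :
    (μ - j * v + P * v ^ 2) / (1 - v ^ 2) = μ ∧ (μ - j * v + P) * v / (1 - v ^ 2) = j := by
  have hden : 1 - v ^ 2 ≠ 0 := sub_ne_zero.2 hv.symm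
  constructor <;> rw [div_eq_iff hden] <;> subst h <;> ring

theorem stmt1_general (ρ₀ : ℝ) (hρ₀ : 0 < ρ₀) (p : ℝ → ℝ) (hp : ContDiff ℝ 1 p)
    (hpnn : ∀ ρ : ℝ, ρ₀ ≤ ρ → 0 ≤ p ρ)
    (D : Set (ℝ × ℝ)) (hD : D = {x : ℝ × ℝ | ρ₀ ≤ x.1 ∧ 0 ≤ x.2 ∧ x.2 < 1})
    (I : Set (ℝ × ℝ))
    (hI : I = {y : ℝ × ℝ | 0 ≤ y.2 ∧ ρ₀ / 2 + Real.sqrt (ρ₀ ^ 2 / 4 + y.2 ^ 2) ≤ y.1})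
    (Φ : ℝ × ℝ → ℝ × ℝ)
    (hΦ : ∀ x : ℝ × ℝ, Φ x = ((x.1 + p x.1 * x.2 ^ 2) / (1 - x.2 ^ 2),
      ((x.1 + p x.1) * x.2) / (1 - x.2 ^ 2))) :
    Set.SurjOn Φ D I := by
  subst hD hI
  rintro ⟨μ, j⟩ ⟨hj, hμ⟩
  dsimp only at hj hμ
  obtain ⟨hμ_half, hj_sq⟩ := half_add_sqrt_le_iff.1 hμ
  have hμ_pos : 0 < μ := by linarith
  have hρ : ∀ v ∈ Icc 0 (j / μ), ρ₀ ≤ μ - j * v := fun v ⟨_, hv⟩ => by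
    have : j * v ≤ j * (j / μ) := mul_le_mul_of_nonneg_left hv hj
    rw [mul_div_assoc', le_div_iff₀ hμ_pos] at this
    nlinarith
  obtain ⟨v, hv, hv_eq⟩ := exists_mem_Icc_mul_add_eq (q := fun v => p (μ - j * v)) hμ_pos hj
    (hp.continuous.comp (by fun_prop)).continuousOn fun v hv => hpnn _ (hρ v hv)
  have hv_lt_one : v < 1 := by
    have hj_lt : j < μ := by nlinarith
    exact hv.2.trans_lt ((div_lt_one hμ_pos).2 hj_lt)
  refine ⟨(μ - j * v, v), ⟨hρ v hv, hv.1, hv_lt_one⟩, ?_⟩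
  have hv_sq : v ^ 2 ≠ 1 := by nlinarith [hv.1]
  obtain ⟨hμ_eq, hj_eq⟩ := div_one_sub_sq_eq_of_eq_mul_add hv_sq hv_eq.symm
  rw [hΦ]
  exact Prod.ext hμ_eq hj_eq

/-- Surjectivity step in the proof of Theorem 4.3: every point of I is the
image under Φ of some point of D. -/
theorem stmt1 (ρ₀ : ℝ) (hρ₀ : 0 < ρ₀) (p : ℝ → ℝ) (hp : ContDiff ℝ 1 p)
    (hp0 : p ρ₀ = 0) (hpnn : ∀ ρ : ℝ, ρ₀ ≤ ρ → 0 ≤ p ρ)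
    (hp' : ∀ ρ : ℝ, ρ₀ ≤ ρ → 0 < deriv p ρ ∧ deriv p ρ < 1)
    (D : Set (ℝ × ℝ)) (hD : D = {x : ℝ × ℝ | ρ₀ ≤ x.1 ∧ 0 ≤ x.2 ∧ x.2 < 1})
    (I : Set (ℝ × ℝ))
    (hI : I = {y : ℝ × ℝ | 0 ≤ y.2 ∧ ρ₀ / 2 + Real.sqrt (ρ₀ ^ 2 / 4 + y.2 ^ 2) ≤ y.1})
    (Φ : ℝ × ℝ → ℝ × ℝ)
    (hΦ : ∀ x : ℝ × ℝ, Φ x = ((x.1 + p x.1 * x.2 ^ 2) / (1 - x.2 ^ 2),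
      ((x.1 + p x.1) * x.2) / (1 - x.2 ^ 2))) :
    Set.SurjOn Φ D I :=
  stmt1_general ρ₀ hρ₀ p hp hpnn D hD I hI Φ hΦ
end

section
/- The map Φ is injective on D: if (ρ₁, v₁) and (ρ₂, v₂) both lie in D and Φ(ρ₁, v₁) = Φ(ρ₂, v₂), then ρ₁ = ρ₂ and v₁ = v₂. (Injectivity step in the proof of Theorem 4.3, proved using the mean value theorem and the bound ∂p/∂ρ < 1.) -/
/-!
Write `(n, m) = Φ(ρ, v)`. Then `ρ = n - m v` and `m = (n + p ρ) v`, so two preimages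
`(ρ₁, v₁)`, `(ρ₂, v₂)` of the same `(n, m)` satisfy
`(v₂ - v₁) (n + p ρ₂) + v₁ (p ρ₂ - p ρ₁) = 0` and `ρ₁ - ρ₂ = m (v₂ - v₁)`.
If `v₁ < v₂`, then `ρ₂ ≤ ρ₁`, and the mean value bound `p ρ₁ - p ρ₂ ≤ ρ₁ - ρ₂` (from `p' < 1`)
turns the first identity into `(v₂ - v₁) (ρ₁ + p ρ₂) ≤ 0`, which is impossible.
By symmetry `v₁ = v₂`, and then `ρ₁ = ρ₂`.
-/

section

variable {ρ P v : ℝ}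

lemma energy_sub_momentum_mul (hv : 1 - v ^ 2 ≠ 0) :
    (ρ + P * v ^ 2) / (1 - v ^ 2) - (ρ + P) * v / (1 - v ^ 2) * v = ρ := by
  field_simp
  ring

lemma momentum_eq_energy_add_mul (hv : 1 - v ^ 2 ≠ 0) :
    (ρ + P) * v / (1 - v ^ 2) = ((ρ + P * v ^ 2) / (1 - v ^ 2) + P) * v := by
  field_simp
  ring

end

lemma velocity_le_of_energy_eq_of_momentum_eq {p : ℝ → ℝ} {ρ₀ ρ₁ v₁ ρ₂ v₂ : ℝ}
    (hlip : ∀ x y, ρ₀ ≤ x → x ≤ y → p y - p x ≤ y - x) (hρ₀ : 0 < ρ₀)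
    (hpnn : ∀ ρ, ρ₀ ≤ ρ → 0 ≤ p ρ)
    (hρ₁ : ρ₀ ≤ ρ₁) (hv₁ : 0 ≤ v₁) (hv₁' : v₁ < 1) (hρ₂ : ρ₀ ≤ ρ₂) (hv₂' : v₂ < 1)
    (hn : (ρ₁ + p ρ₁ * v₁ ^ 2) / (1 - v₁ ^ 2) = (ρ₂ + p ρ₂ * v₂ ^ 2) / (1 - v₂ ^ 2))
    (hm : (ρ₁ + p ρ₁) * v₁ / (1 - v₁ ^ 2) = (ρ₂ + p ρ₂) * v₂ / (1 - v₂ ^ 2)) :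
    v₂ ≤ v₁ := by
  by_contra! hlt
  have hs₁ : 0 < 1 - v₁ ^ 2 := by nlinarith
  have hs₂ : 0 < 1 - v₂ ^ 2 := by nlinarith
  set n := (ρ₁ + p ρ₁ * v₁ ^ 2) / (1 - v₁ ^ 2)
  set m := (ρ₁ + p ρ₁) * v₁ / (1 - v₁ ^ 2)
  have hρ₁_eq : n - m * v₁ = ρ₁ := energy_sub_momentum_mul hs₁.ne'
  have hρ₂_eq : n - m * v₂ = ρ₂ := by rw [hn, hm]; exact energy_sub_momentum_mul hs₂.ne'
  have hm₁ : m = (n + p ρ₁) * v₁ := momentum_eq_energy_add_mul hs₁.ne'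
  have hm₂ : m = (n + p ρ₂) * v₂ := by rw [hn, hm]; exact momentum_eq_energy_add_mul hs₂.ne'
  have hm_nonneg : 0 ≤ m := div_nonneg (mul_nonneg (by linarith [hpnn ρ₁ hρ₁]) hv₁) hs₁.le
  have hρ_le : ρ₂ ≤ ρ₁ := by nlinarith
  have hp_le : p ρ₁ - p ρ₂ ≤ ρ₁ - ρ₂ := hlip ρ₂ ρ₁ hρ₂ hρ_le
  have hpos : 0 < (v₂ - v₁) * (ρ₁ + p ρ₂) :=
    mul_pos (sub_pos.2 hlt) (by linarith [hpnn ρ₂ hρ₂])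
  nlinarith [mul_le_mul_of_nonneg_left hp_le hv₁]

theorem stmt2_general (ρ₀ : ℝ) (hρ₀ : 0 < ρ₀) (p : ℝ → ℝ) (hp : ContDiff ℝ 1 p)
    (hpnn : ∀ ρ : ℝ, ρ₀ ≤ ρ → 0 ≤ p ρ)
    (hp' : ∀ ρ : ℝ, ρ₀ ≤ ρ → 0 < deriv p ρ ∧ deriv p ρ < 1)
    (D : Set (ℝ × ℝ)) (hD : D = {x : ℝ × ℝ | ρ₀ ≤ x.1 ∧ 0 ≤ x.2 ∧ x.2 < 1})
    (Φ : ℝ × ℝ → ℝ × ℝ)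
    (hΦ : ∀ x : ℝ × ℝ, Φ x = ((x.1 + p x.1 * x.2 ^ 2) / (1 - x.2 ^ 2),
      ((x.1 + p x.1) * x.2) / (1 - x.2 ^ 2)))
    (ρ₁ v₁ ρ₂ v₂ : ℝ) (h₁ : (ρ₁, v₁) ∈ D) (h₂ : (ρ₂, v₂) ∈ D)
    (heq : Φ (ρ₁, v₁) = Φ (ρ₂, v₂)) :
    ρ₁ = ρ₂ ∧ v₁ = v₂ := by
  subst hD
  obtain ⟨hρ₁, hv₁, hv₁'⟩ := h₁
  obtain ⟨hρ₂, hv₂, hv₂'⟩ := h₂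
  simp only [hΦ, Prod.mk.injEq] at heq
  obtain ⟨hn, hm⟩ := heq
  have hdiff : Differentiable ℝ p := hp.differentiable one_ne_zero
  have hlip : ∀ x y, ρ₀ ≤ x → x ≤ y → p y - p x ≤ y - x := fun x y hx hxy => by
    simpa using (convex_Ici ρ₀).image_sub_le_mul_sub_of_deriv_le hdiff.continuous.continuousOn
      hdiff.differentiableOn (fun z hz => (hp' z (interior_subset hz)).2.le) x hx y
      (hx.trans hxy) hxy
  have hv : v₁ = v₂ := le_antisymm
    (velocity_le_of_energy_eq_of_momentum_eq hlip hρ₀ hpnn hρ₂ hv₂ hv₂' hρ₁ hv₁' hn.symm hm.symm)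
    (velocity_le_of_energy_eq_of_momentum_eq hlip hρ₀ hpnn hρ₁ hv₁ hv₁' hρ₂ hv₂' hn hm)
  subst hv
  have hs : 1 - v₁ ^ 2 ≠ 0 := by nlinarith
  refine ⟨?_, rfl⟩
  rw [← energy_sub_momentum_mul (ρ := ρ₁) (P := p ρ₁) hs,
    ← energy_sub_momentum_mul (ρ := ρ₂) (P := p ρ₂) hs, hn, hm]

/-- Injectivity step in the proof of Theorem 4.3: Φ is injective on D. -/
theorem stmt2 (ρ₀ : ℝ) (hρ₀ : 0 < ρ₀) (p : ℝ → ℝ) (hp : ContDiff ℝ 1 p)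
    (hp0 : p ρ₀ = 0) (hpnn : ∀ ρ : ℝ, ρ₀ ≤ ρ → 0 ≤ p ρ)
    (hp' : ∀ ρ : ℝ, ρ₀ ≤ ρ → 0 < deriv p ρ ∧ deriv p ρ < 1)
    (D : Set (ℝ × ℝ)) (hD : D = {x : ℝ × ℝ | ρ₀ ≤ x.1 ∧ 0 ≤ x.2 ∧ x.2 < 1})
    (Φ : ℝ × ℝ → ℝ × ℝ)
    (hΦ : ∀ x : ℝ × ℝ, Φ x = ((x.1 + p x.1 * x.2 ^ 2) / (1 - x.2 ^ 2),
      ((x.1 + p x.1) * x.2) / (1 - x.2 ^ 2)))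
    (ρ₁ v₁ ρ₂ v₂ : ℝ) (h₁ : (ρ₁, v₁) ∈ D) (h₂ : (ρ₂, v₂) ∈ D)
    (heq : Φ (ρ₁, v₁) = Φ (ρ₂, v₂)) :
    ρ₁ = ρ₂ ∧ v₁ = v₂ :=
  stmt2_general ρ₀ hρ₀ p hp hpnn hp' D hD Φ hΦ ρ₁ v₁ ρ₂ v₂ h₁ h₂ heq
end

section
/- At every point (ρ, v) with ρ ≥ ρ₀ and 0 ≤ v < 1, the map Φ is (Fréchet) differentiable and the determinant of its derivative equals (ρ + p(ρ)) (1 − p'(ρ) v²) / (1 − v²)², which is strictly positive; in particular the derivative of Φ at each point of D is an invertible linear map of ℝ². (Invertibility of DΦ used in the proof of Theorem 4.3 to conclude that Φ⁻¹ is differentiable.) -/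
/-! The two components of Φ are the energy and momentum densities of a relativistic perfect
fluid. Their partial derivatives follow from the chain rule, and the Jacobian determinant is
(ρ + p) ((1 + p' v²)(1 + v²) - 2 v² (1 + p')) / (1 - v²)³; the bracket factors as
(1 - v²)(1 - p' v²), which is positive because v² < 1 and p' < 1. -/

open ContinuousLinearMap

theorem ContinuousLinearMap.det_prod_smul_fst_add_smul_snd {R : Type*} [CommRing R]
    [TopologicalSpace R] [IsTopologicalRing R] (a b c d : R) :
    LinearMap.det (((a • fst R R R + b • snd R R R).prod (c • fst R R R + d • snd R R R) :
      R × R →L[R] R × R) : R × R →ₗ[R] R × R) = a * d - b * c := by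
  rw [← LinearMap.det_toMatrix (Module.Basis.finTwoProd R), Matrix.det_fin_two]
  simp [LinearMap.toMatrix_apply]

theorem hasDerivAt_inv_one_sub_sq {v : ℝ} (hv : 1 - v ^ 2 ≠ 0) :
    HasDerivAt (fun y : ℝ => (1 - y ^ 2)⁻¹) (2 * v / (1 - v ^ 2) ^ 2) v :=
  (((hasDerivAt_pow 2 v).const_sub 1).inv hv).congr_deriv (by push_cast; ring)

section PerfectFluid

variable {p : ℝ → ℝ} {p' ρ v : ℝ}

theorem hasFDerivAt_energyDensity (hp : HasDerivAt p p' ρ) (hv : 1 - v ^ 2 ≠ 0) :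
    HasFDerivAt (fun x : ℝ × ℝ => (x.1 + p x.1 * x.2 ^ 2) / (1 - x.2 ^ 2))
      (((1 + p' * v ^ 2) / (1 - v ^ 2)) • fst ℝ ℝ ℝ
        + (2 * v * (ρ + p ρ) / (1 - v ^ 2) ^ 2) • snd ℝ ℝ ℝ) (ρ, v) := by
  have hsnd : HasFDerivAt (fun x : ℝ × ℝ => x.2) (snd ℝ ℝ ℝ) (ρ, v) := hasFDerivAt_snd
  have hnum : HasFDerivAt (fun x : ℝ × ℝ => x.1 + p x.1 * x.2 ^ 2)
      (fst ℝ ℝ ℝ + (p ρ • ((2 * v) • snd ℝ ℝ ℝ) + v ^ 2 • p' • fst ℝ ℝ ℝ)) (ρ, v) :=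
    hasFDerivAt_fst.add ((hp.comp_hasFDerivAt _ hasFDerivAt_fst).fun_mul
      (by simpa using (hasDerivAt_pow 2 v).comp_hasFDerivAt _ hsnd))
  refine (hnum.fun_mul ((hasDerivAt_inv_one_sub_sq hv).comp_hasFDerivAt _ hsnd)).congr_fderiv ?_
  ext <;> simp <;> field

theorem hasFDerivAt_momentumDensity (hp : HasDerivAt p p' ρ) (hv : 1 - v ^ 2 ≠ 0) :
    HasFDerivAt (fun x : ℝ × ℝ => (x.1 + p x.1) * x.2 / (1 - x.2 ^ 2))
      (((1 + p') * v / (1 - v ^ 2)) • fst ℝ ℝ ℝ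
        + ((ρ + p ρ) * (1 + v ^ 2) / (1 - v ^ 2) ^ 2) • snd ℝ ℝ ℝ) (ρ, v) := by
  have hsnd : HasFDerivAt (fun x : ℝ × ℝ => x.2) (snd ℝ ℝ ℝ) (ρ, v) := hasFDerivAt_snd
  have hnum : HasFDerivAt (fun x : ℝ × ℝ => (x.1 + p x.1) * x.2)
      ((ρ + p ρ) • snd ℝ ℝ ℝ + v • (fst ℝ ℝ ℝ + p' • fst ℝ ℝ ℝ)) (ρ, v) :=
    (hasFDerivAt_fst.add (hp.comp_hasFDerivAt _ hasFDerivAt_fst)).fun_mul hsnd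
  refine (hnum.fun_mul ((hasDerivAt_inv_one_sub_sq hv).comp_hasFDerivAt _ hsnd)).congr_fderiv ?_
  ext <;> simp <;> field

end PerfectFluid

theorem stmt3_general (ρ₀ : ℝ) (hρ₀ : 0 < ρ₀) (p : ℝ → ℝ) (hp : ContDiff ℝ 1 p)
    (hpnn : ∀ ρ : ℝ, ρ₀ ≤ ρ → 0 ≤ p ρ)
    (hp' : ∀ ρ : ℝ, ρ₀ ≤ ρ → 0 < deriv p ρ ∧ deriv p ρ < 1)
    (Φ : ℝ × ℝ → ℝ × ℝ)
    (hΦ : ∀ x : ℝ × ℝ, Φ x = ((x.1 + p x.1 * x.2 ^ 2) / (1 - x.2 ^ 2),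
      ((x.1 + p x.1) * x.2) / (1 - x.2 ^ 2)))
    (ρ v : ℝ) (hρ : ρ₀ ≤ ρ) (hv0 : 0 ≤ v) (hv1 : v < 1) :
    ∃ L : (ℝ × ℝ) →L[ℝ] (ℝ × ℝ),
      HasFDerivAt Φ L (ρ, v) ∧
      LinearMap.det (L : (ℝ × ℝ) →ₗ[ℝ] (ℝ × ℝ)) =
        (ρ + p ρ) * (1 - deriv p ρ * v ^ 2) / (1 - v ^ 2) ^ 2 ∧
      0 < (ρ + p ρ) * (1 - deriv p ρ * v ^ 2) / (1 - v ^ 2) ^ 2 ∧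
      Function.Bijective L := by
  have hv : 0 < 1 - v ^ 2 := by nlinarith
  have hpd : HasDerivAt p (deriv p ρ) ρ := (hp.differentiable one_ne_zero ρ).hasDerivAt
  have hpos : 0 < (ρ + p ρ) * (1 - deriv p ρ * v ^ 2) / (1 - v ^ 2) ^ 2 := by
    have hρp : 0 < ρ + p ρ := by linarith [hpnn ρ hρ]
    have hp'v : 0 < 1 - deriv p ρ * v ^ 2 := by nlinarith [hp' ρ hρ]
    positivity
  have hΦd := (hasFDerivAt_energyDensity hpd hv.ne').prodMk (hasFDerivAt_momentumDensity hpd hv.ne')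
  rw [← funext hΦ] at hΦd
  obtain ⟨L, hL, hdet⟩ : ∃ L : ℝ × ℝ →L[ℝ] ℝ × ℝ, HasFDerivAt Φ L (ρ, v) ∧
      LinearMap.det (L : ℝ × ℝ →ₗ[ℝ] ℝ × ℝ) =
        (ρ + p ρ) * (1 - deriv p ρ * v ^ 2) / (1 - v ^ 2) ^ 2 := by
    refine ⟨_, hΦd, ?_⟩
    rw [det_prod_smul_fst_add_smul_snd]
    field_simp
    ring
  exact ⟨L, hL, hdet, hpos, (LinearMap.equivOfDetNeZero _ (hdet ▸ hpos.ne')).bijective⟩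

/-- Invertibility of DΦ used in the proof of Theorem 4.3: at every point of D,
Φ is Fréchet differentiable, the determinant of its derivative equals
(ρ + p(ρ))(1 − p'(ρ)v²)/(1 − v²)², which is strictly positive, and in
particular the derivative is an invertible linear map of ℝ². -/
theorem stmt3 (ρ₀ : ℝ) (hρ₀ : 0 < ρ₀) (p : ℝ → ℝ) (hp : ContDiff ℝ 1 p)
    (hp0 : p ρ₀ = 0) (hpnn : ∀ ρ : ℝ, ρ₀ ≤ ρ → 0 ≤ p ρ)
    (hp' : ∀ ρ : ℝ, ρ₀ ≤ ρ → 0 < deriv p ρ ∧ deriv p ρ < 1)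
    (Φ : ℝ × ℝ → ℝ × ℝ)
    (hΦ : ∀ x : ℝ × ℝ, Φ x = ((x.1 + p x.1 * x.2 ^ 2) / (1 - x.2 ^ 2),
      ((x.1 + p x.1) * x.2) / (1 - x.2 ^ 2)))
    (ρ v : ℝ) (hρ : ρ₀ ≤ ρ) (hv0 : 0 ≤ v) (hv1 : v < 1) :
    ∃ L : (ℝ × ℝ) →L[ℝ] (ℝ × ℝ),
      HasFDerivAt Φ L (ρ, v) ∧
      LinearMap.det (L : (ℝ × ℝ) →ₗ[ℝ] (ℝ × ℝ)) =
        (ρ + p ρ) * (1 - deriv p ρ * v ^ 2) / (1 - v ^ 2) ^ 2 ∧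
      0 < (ρ + p ρ) * (1 - deriv p ρ * v ^ 2) / (1 - v ^ 2) ^ 2 ∧
      Function.Bijective L :=
  stmt3_general ρ₀ hρ₀ p hp hpnn hp' Φ hΦ ρ v hρ hv0 hv1
end

section
/- The map Φ maps D into I: for every (ρ, v) with ρ ≥ ρ₀ and 0 ≤ v < 1, setting μ = (ρ + p(ρ)v²)/(1 − v²) and j = ((ρ + p(ρ))v)/(1 − v²), one has j ≥ 0 and μ ≥ ρ₀/2 + √(ρ₀²/4 + j²). (Well-definedness of Φ : D → I implicit in Theorem 4.3.) -/
/-!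
Since `p' < 1` and `p ρ₀ = 0`, the mean value theorem gives `0 ≤ p ρ ≤ ρ - ρ₀`. Writing
`s = v²`, one has `μ² - j² = (ρ² - p(ρ)² s) / (1 - s)`, so the defining inequality of `I`,
`ρ₀ μ + j² ≤ μ²` (the largest root of `μ² - ρ₀ μ - j²` is `μ₀(j)`), reduces to
`s · p(ρ) (p(ρ) + ρ₀) ≤ ρ (ρ - ρ₀)`, which follows from `s ≤ 1` and the bound on `p ρ`.
-/

open Real Set

lemma div_two_add_sqrt_le_of_mul_add_sq_le {a j μ : ℝ} (ha : a / 2 ≤ μ)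
    (h : a * μ + j ^ 2 ≤ μ ^ 2) : a / 2 + √(a ^ 2 / 4 + j ^ 2) ≤ μ := by
  have hsq : a ^ 2 / 4 + j ^ 2 ≤ (μ - a / 2) ^ 2 := by nlinarith
  calc a / 2 + √(a ^ 2 / 4 + j ^ 2)
      ≤ a / 2 + √((μ - a / 2) ^ 2) := by gcongr
    _ = μ := by rw [sqrt_sq (by linarith)]; ring

lemma le_add_mul_sq_div_one_sub_sq {ρ q v : ℝ} (hρ : 0 ≤ ρ) (hq : 0 ≤ q) (hv : v ^ 2 < 1) :
    ρ ≤ (ρ + q * v ^ 2) / (1 - v ^ 2) := by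
  rw [le_div_iff₀ (by linarith)]
  nlinarith [sq_nonneg v]

lemma mul_add_sq_le_sq_of_le_sub {ρ₀ ρ q v : ℝ} (hρ₀ : 0 ≤ ρ₀) (hq0 : 0 ≤ q)
    (hq : q ≤ ρ - ρ₀) (hv : v ^ 2 < 1) :
    ρ₀ * ((ρ + q * v ^ 2) / (1 - v ^ 2)) + ((ρ + q) * v / (1 - v ^ 2)) ^ 2
      ≤ ((ρ + q * v ^ 2) / (1 - v ^ 2)) ^ 2 := by
  have hs : 0 < 1 - v ^ 2 := by linarith
  have hpq : v ^ 2 * (q * (q + ρ₀)) ≤ ρ * (ρ - ρ₀) := calc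
    v ^ 2 * (q * (q + ρ₀)) ≤ q * (q + ρ₀) :=
      mul_le_of_le_one_left (by positivity) (by linarith)
    _ ≤ (ρ - ρ₀) * ρ := by gcongr <;> linarith
    _ = ρ * (ρ - ρ₀) := mul_comm _ _
  have hid : ((ρ + q * v ^ 2) / (1 - v ^ 2)) ^ 2
      - (ρ₀ * ((ρ + q * v ^ 2) / (1 - v ^ 2)) + ((ρ + q) * v / (1 - v ^ 2)) ^ 2)
      = (ρ * (ρ - ρ₀) - v ^ 2 * (q * (q + ρ₀))) / (1 - v ^ 2) := by
    field_simp
    ring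
  rw [← sub_nonneg, hid]
  exact div_nonneg (by linarith) hs.le

/-- Well-definedness of Φ : D → I implicit in Theorem 4.3: Φ maps D into I. -/
theorem stmt4 (ρ₀ : ℝ) (hρ₀ : 0 < ρ₀) (p : ℝ → ℝ) (hp : ContDiff ℝ 1 p)
    (hp0 : p ρ₀ = 0) (hpnn : ∀ ρ : ℝ, ρ₀ ≤ ρ → 0 ≤ p ρ)
    (hp' : ∀ ρ : ℝ, ρ₀ ≤ ρ → 0 < deriv p ρ ∧ deriv p ρ < 1)
    (ρ v : ℝ) (hρ : ρ₀ ≤ ρ) (hv0 : 0 ≤ v) (hv1 : v < 1)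
    (μ j : ℝ) (hμ : μ = (ρ + p ρ * v ^ 2) / (1 - v ^ 2))
    (hj : j = ((ρ + p ρ) * v) / (1 - v ^ 2)) :
    0 ≤ j ∧ ρ₀ / 2 + Real.sqrt (ρ₀ ^ 2 / 4 + j ^ 2) ≤ μ := by
  have hdiff : Differentiable ℝ p := hp.differentiable one_ne_zero
  have hq0 : 0 ≤ p ρ := hpnn ρ hρ
  have hq : p ρ ≤ ρ - ρ₀ := by
    have := (convex_Ici ρ₀).image_sub_le_mul_sub_of_deriv_le hdiff.continuous.continuousOn
      hdiff.differentiableOn (C := 1)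
      (fun x hx => (hp' x (interior_subset hx)).2.le) ρ₀ self_mem_Ici ρ hρ hρ
    linarith
  have hv : v ^ 2 < 1 := by nlinarith
  subst hμ hj
  refine ⟨div_nonneg (mul_nonneg (by linarith) hv0) (by linarith), ?_⟩
  refine div_two_add_sqrt_le_of_mul_add_sq_le ?_ (mul_add_sq_le_sq_of_le_sub hρ₀.le hq0 hq hv)
  linarith [le_add_mul_sq_div_one_sub_sq (hρ₀.le.trans hρ) hq0 hv]
end

section
/- Fix (μ, j) ∈ I, so that μ ≥ ρ₀/2 + √(ρ₀²/4 + j²) and j ≥ 0 (in particular 0 < μ and j/μ < 1). Define F(x, y) := ( μ − j y , (j/μ) · (x + p(x) y²)/(x + p(x)) ) and the compact convex set C := [ρ₀, μ] × [0, j/μ] ⊂ ℝ². Then F is continuous on C and F maps C into C. (Self-mapping property of the auxiliary map F, used with Brouwer's fixed-point theorem in the proof of Theorem 4.3; here the second interval of the box is [0, j/μ] so that F₁(x,y) = μ − j y ≥ μ − j²/μ ≥ ρ₀.) -/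
/-!
Writing `μ ≥ ρ₀/2 + √(ρ₀²/4 + j²)` as `(μ - ρ₀/2)² ≥ ρ₀²/4 + j²` gives `j² ≤ μ (μ - ρ₀)`, i.e.
`μ - j · (j/μ) ≥ ρ₀`, which is exactly what keeps the first component in `[ρ₀, μ]`. The second
component is `j/μ` times a convex combination of `1` and `y² ≤ 1`, the denominator `x + p x`
being positive on the box since `x ≥ ρ₀ > 0` and `p ≥ 0` there.
-/

open Set

section RootBound

variable {a b μ : ℝ}

theorem le_of_half_add_sqrt_le (h : a / 2 + √(a ^ 2 / 4 + b ^ 2) ≤ μ) : a ≤ μ := by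
  have : |a| / 2 ≤ √(a ^ 2 / 4 + b ^ 2) := by
    rw [← Real.sqrt_sq (by positivity : 0 ≤ |a| / 2), div_pow, sq_abs]
    exact Real.sqrt_le_sqrt (by nlinarith [sq_nonneg b])
  linarith [le_abs_self a]

theorem abs_le_of_half_add_sqrt_le (ha : 0 ≤ a) (h : a / 2 + √(a ^ 2 / 4 + b ^ 2) ≤ μ) :
    |b| ≤ μ := by
  have : |b| ≤ √(a ^ 2 / 4 + b ^ 2) := by
    rw [← Real.sqrt_sq_eq_abs]
    exact Real.sqrt_le_sqrt (by nlinarith [sq_nonneg a])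
  linarith

theorem sq_le_mul_sub_of_half_add_sqrt_le (h : a / 2 + √(a ^ 2 / 4 + b ^ 2) ≤ μ) :
    b ^ 2 ≤ μ * (μ - a) := by
  have hs := Real.sq_sqrt (by positivity : 0 ≤ a ^ 2 / 4 + b ^ 2)
  nlinarith [Real.sqrt_nonneg (a ^ 2 / 4 + b ^ 2)]

end RootBound

theorem sub_mul_mem_Icc {a j μ y : ℝ} (hj : 0 ≤ j) (hμ : 0 < μ) (hjμ : j ^ 2 ≤ μ * (μ - a))
    (hy : y ∈ Icc 0 (j / μ)) : μ - j * y ∈ Icc a μ := by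
  have : j * y ≤ μ - a := calc
    j * y ≤ j * (j / μ) := mul_le_mul_of_nonneg_left hy.2 hj
    _ = j ^ 2 / μ := by ring
    _ ≤ μ - a := by rw [div_le_iff₀ hμ]; linarith
  constructor <;> nlinarith [mul_nonneg hj hy.1]

theorem add_mul_sq_div_add_mem_Icc {x q y : ℝ} (hx : 0 < x) (hq : 0 ≤ q) (hy : y ^ 2 ≤ 1) :
    (x + q * y ^ 2) / (x + q) ∈ Icc 0 1 := by
  have hden : 0 < x + q := by linarith
  refine ⟨div_nonneg (by positivity) hden.le, (div_le_one hden).2 ?_⟩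
  nlinarith [mul_le_mul_of_nonneg_left hy hq]

theorem stmt6_general (ρ₀ : ℝ) (hρ₀ : 0 < ρ₀) (p : ℝ → ℝ) (hp : Continuous p)
    (hpnn : ∀ ρ : ℝ, ρ₀ ≤ ρ → 0 ≤ p ρ)
    (μ j : ℝ) (hj : 0 ≤ j) (hμ : ρ₀ / 2 + Real.sqrt (ρ₀ ^ 2 / 4 + j ^ 2) ≤ μ)
    (F : ℝ × ℝ → ℝ × ℝ)
    (hF : ∀ x : ℝ × ℝ, F x = (μ - j * x.2,
      (j / μ) * ((x.1 + p x.1 * x.2 ^ 2) / (x.1 + p x.1))))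
    (C : Set (ℝ × ℝ)) (hC : C = Set.Icc ρ₀ μ ×ˢ Set.Icc 0 (j / μ)) :
    ContinuousOn F C ∧ Set.MapsTo F C C := by
  have hμ0 : 0 < μ := hρ₀.trans_le (le_of_half_add_sqrt_le hμ)
  have hjμ : j / μ ≤ 1 :=
    (div_le_one hμ0).2 ((le_abs_self j).trans (abs_le_of_half_add_sqrt_le hρ₀.le hμ))
  subst hC
  have hpos : ∀ z ∈ Icc ρ₀ μ ×ˢ Icc 0 (j / μ), 0 < z.1 + p z.1 := by
    rintro z ⟨⟨hz, -⟩, -⟩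
    linarith [hpnn _ hz]
  rw [funext hF]
  refine ⟨ContinuousOn.prodMk (by fun_prop) <| continuousOn_const.mul <|
    ContinuousOn.div (by fun_prop) (by fun_prop) fun z hz ↦ (hpos z hz).ne', ?_⟩
  rintro z ⟨⟨hx, -⟩, hy₀, hy₁⟩
  have hy : z.2 ^ 2 ≤ 1 := pow_le_one₀ hy₀ (hy₁.trans hjμ)
  obtain ⟨hr₀, hr₁⟩ := add_mul_sq_div_add_mem_Icc (hρ₀.trans_le hx) (hpnn _ hx) hy
  exact ⟨sub_mul_mem_Icc hj hμ0 (sq_le_mul_sub_of_half_add_sqrt_le hμ) ⟨hy₀, hy₁⟩,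
    mul_nonneg (div_nonneg hj hμ0.le) hr₀, mul_le_of_le_one_right (div_nonneg hj hμ0.le) hr₁⟩

/-- Self-mapping property of the auxiliary map F, used with Brouwer's
fixed-point theorem in the proof of Theorem 4.3: F is continuous on the
compact convex box C = [ρ₀, μ] × [0, j/μ] and maps C into itself. -/
theorem stmt6 (ρ₀ : ℝ) (hρ₀ : 0 < ρ₀) (p : ℝ → ℝ) (hp : Continuous p)
    (hp0 : p ρ₀ = 0) (hpnn : ∀ ρ : ℝ, ρ₀ ≤ ρ → 0 ≤ p ρ)
    (μ j : ℝ) (hj : 0 ≤ j) (hμ : ρ₀ / 2 + Real.sqrt (ρ₀ ^ 2 / 4 + j ^ 2) ≤ μ)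
    (F : ℝ × ℝ → ℝ × ℝ)
    (hF : ∀ x : ℝ × ℝ, F x = (μ - j * x.2,
      (j / μ) * ((x.1 + p x.1 * x.2 ^ 2) / (x.1 + p x.1))))
    (C : Set (ℝ × ℝ)) (hC : C = Set.Icc ρ₀ μ ×ˢ Set.Icc 0 (j / μ)) :
    ContinuousOn F C ∧ Set.MapsTo F C C :=
  stmt6_general ρ₀ hρ₀ p hp hpnn μ j hj hμ F hF C hC
end

section
/- Let m > 0 and r₀ > 0, and set r₁ := √(2r₀³/m) and a := (r₀ + m/2)⁶/(2 m r₀³). Define θ̂ : ℝ³ → ℝ by θ̂(x) = 1 + m/(2‖x‖) if ‖x‖ ≥ r₀, and θ̂(x) = a^{1/4} (2r₁/(r₁² + ‖x‖²))^{1/2} if ‖x‖ < r₀. Then θ̂ is continuously differentiable (of class C¹) on all of ℝ³. (The conformal factor of the static spherical liquid body of the Appendix, matching a round 3-sphere of radius a^{1/2} to a Schwarzschild slice, is a C¹ function on ℝ³.) -/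
/-!
Both branches of θ̂ are smooth functions of the squared radius s = ‖x‖² on a neighbourhood of the
region where they are used (the sphere branch even at s = 0, which is why we work with ‖x‖²
rather than ‖x‖), so θ̂ is C¹ as soon as the two branches agree to first order at s = r₀².
The constants are chosen for exactly this: with r₁² = 2r₀³/m and √a·r₁ = (r₀ + m/2)³/m, both
branches take the value 1 + m/(2r₀) at s = r₀², and both have s-derivative -m/(4r₀³) there.
-/

open Filter Topology Set

section GluingTopology

variable {β : Type*} {f g : ℝ → β} {c t : ℝ}

theorem ite_le_eventuallyEq_of_lt (ht : t < c) :
    (fun s => if c ≤ s then g s else f s) =ᶠ[𝓝 t] f := by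
  filter_upwards [Iio_mem_nhds ht] with s hs
  simp [not_le.mpr (mem_Iio.mp hs)]

theorem ite_le_eventuallyEq_of_gt (ht : c < t) :
    (fun s => if c ≤ s then g s else f s) =ᶠ[𝓝 t] g := by
  filter_upwards [Ioi_mem_nhds ht] with s hs
  simp [(mem_Ioi.mp hs).le]

theorem ite_le_eqOn_Iic (h0 : f c = g c) :
    EqOn (fun s => if c ≤ s then g s else f s) f (Iic c) := by
  intro s hs
  rcases (mem_Iic.mp hs).lt_or_eq with h | rfl
  · simp [not_le.mpr h]
  · simp [h0]

theorem ite_le_eqOn_Ici : EqOn (fun s => if c ≤ s then g s else f s) g (Ici c) := by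
  intro s hs
  simp [mem_Ici.mp hs]

theorem ContinuousAt.ite_le [TopologicalSpace β] (hf : ContinuousAt f c) (hg : ContinuousAt g c)
    (h0 : f c = g c) : ContinuousAt (fun s => if c ≤ s then g s else f s) c := by
  have hleft := hf.continuousWithinAt.congr (ite_le_eqOn_Iic h0) (ite_le_eqOn_Iic h0 self_mem_Iic)
  have hright :=
    hg.continuousWithinAt.congr (ite_le_eqOn_Ici (f := f)) (ite_le_eqOn_Ici self_mem_Ici)
  rw [← continuousWithinAt_univ, ← Iic_union_Ici]
  exact hleft.union hright

end GluingTopology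

section GluingDeriv

variable {F : Type*} [NormedAddCommGroup F] [NormedSpace ℝ F] {f g : ℝ → F} {c t : ℝ}

theorem HasDerivAt.ite_le {f' : F} (hf : HasDerivAt f f' c) (hg : HasDerivAt g f' c)
    (h0 : f c = g c) : HasDerivAt (fun s => if c ≤ s then g s else f s) f' c := by
  have hleft := hf.hasDerivWithinAt.congr (ite_le_eqOn_Iic h0) (ite_le_eqOn_Iic h0 self_mem_Iic)
  have hright :=
    hg.hasDerivWithinAt.congr (ite_le_eqOn_Ici (f := f)) (ite_le_eqOn_Ici self_mem_Ici)
  rw [← hasDerivWithinAt_univ, ← Iic_union_Ici]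
  exact hleft.union hright

theorem contDiffAt_ite_le_of_ne {n : WithTop ℕ∞} (htc : t ≠ c)
    (hf : t ≤ c → ContDiffAt ℝ n f t) (hg : c ≤ t → ContDiffAt ℝ n g t) :
    ContDiffAt ℝ n (fun s => if c ≤ s then g s else f s) t := by
  rcases htc.lt_or_gt with ht | ht
  · exact (hf ht.le).congr_of_eventuallyEq (ite_le_eventuallyEq_of_lt ht)
  · exact (hg ht.le).congr_of_eventuallyEq (ite_le_eventuallyEq_of_gt ht)

theorem deriv_ite_le (hf : DifferentiableAt ℝ f c) (hg : DifferentiableAt ℝ g c)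
    (h0 : f c = g c) (h1 : deriv f c = deriv g c) :
    deriv (fun s => if c ≤ s then g s else f s) =
      fun s => if c ≤ s then deriv g s else deriv f s := by
  funext t
  rcases lt_trichotomy t c with ht | rfl | ht
  · simp [(ite_le_eventuallyEq_of_lt ht).deriv_eq, not_le.mpr ht]
  · simpa [h1] using (hf.hasDerivAt.ite_le (h1 ▸ hg.hasDerivAt) h0).deriv
  · simp [(ite_le_eventuallyEq_of_gt ht).deriv_eq, ht.le]

theorem contDiffAt_ite_le_self (hf : ContDiffAt ℝ 1 f c) (hg : ContDiffAt ℝ 1 g c)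
    (h0 : f c = g c) (h1 : deriv f c = deriv g c) :
    ContDiffAt ℝ 1 (fun s => if c ≤ s then g s else f s) c := by
  obtain ⟨u, hu, hfu, hgu⟩ : ∃ u ∈ 𝓝 c, ContDiffOn ℝ 1 f u ∧ ContDiffOn ℝ 1 g u := by
    obtain ⟨v, hv, hfv⟩ := hf.contDiffOn le_rfl (by simp)
    obtain ⟨w, hw, hgw⟩ := hg.contDiffOn le_rfl (by simp)
    exact ⟨v ∩ w, inter_mem hv hw, hfv.mono inter_subset_left, hgw.mono inter_subset_right⟩
  obtain ⟨o, hou, ho, hco⟩ := mem_nhds_iff.mp hu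
  have hcontDiffAt : ∀ t ∈ o, t ≠ c → ContDiffAt ℝ 1 (fun s => if c ≤ s then g s else f s) t :=
    fun t ht htc => contDiffAt_ite_le_of_ne htc
      (fun _ => hfu.contDiffAt (mem_of_superset (ho.mem_nhds ht) hou))
      (fun _ => hgu.contDiffAt (mem_of_superset (ho.mem_nhds ht) hou))
  refine ContDiffOn.contDiffAt ?_ (ho.mem_nhds hco)
  rw [show (1 : WithTop ℕ∞) = 0 + 1 from rfl, contDiffOn_succ_iff_deriv_of_isOpen ho]
  refine ⟨fun t ht => ?_, by simp, contDiffOn_zero.mpr fun t ht => ?_⟩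
  · rcases eq_or_ne t c with rfl | htc
    · exact (hf.differentiableAt_one.hasDerivAt.ite_le
        (h1 ▸ hg.differentiableAt_one.hasDerivAt) h0).differentiableAt.differentiableWithinAt
    · exact (hcontDiffAt t ht htc).differentiableAt_one.differentiableWithinAt
  · rcases eq_or_ne t c with rfl | htc
    · rw [deriv_ite_le hf.differentiableAt_one hg.differentiableAt_one h0 h1]
      exact ((hf.derivWithin (m := 0) le_rfl).continuousAt.ite_le
        (hg.derivWithin (m := 0) le_rfl).continuousAt h1).continuousWithinAt
    · exact ((hcontDiffAt t ht htc).derivWithin (m := 0) le_rfl).continuousAt.continuousWithinAt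

theorem contDiffAt_ite_le (hf : t ≤ c → ContDiffAt ℝ 1 f t) (hg : c ≤ t → ContDiffAt ℝ 1 g t)
    (h0 : f c = g c) (h1 : deriv f c = deriv g c) :
    ContDiffAt ℝ 1 (fun s => if c ≤ s then g s else f s) t := by
  rcases eq_or_ne t c with rfl | htc
  · exact contDiffAt_ite_le_self (hf le_rfl) (hg le_rfl) h0 h1
  · exact contDiffAt_ite_le_of_ne htc hf hg

end GluingDeriv

-- The two branches of θ̂, as functions of s = ‖x‖².
noncomputable def schwarzschildFactor (m s : ℝ) : ℝ := 1 + m / (2 * √s)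

noncomputable def sphereFactor (a r₁ s : ℝ) : ℝ := a ^ ((1 : ℝ) / 4) * √(2 * r₁ / (r₁ ^ 2 + s))

section Factors

variable {m a r₁ s : ℝ}

theorem contDiffAt_schwarzschildFactor {n : WithTop ℕ∞} (hs : 0 < s) :
    ContDiffAt ℝ n (schwarzschildFactor m) s := by
  unfold schwarzschildFactor
  fun_prop (disch := first | exact hs.ne' | positivity)

theorem hasDerivAt_schwarzschildFactor (hs : 0 < s) :
    HasDerivAt (schwarzschildFactor m) (-m / (4 * s * √s)) s := by
  have h := ((hasDerivAt_const s m).div ((Real.hasDerivAt_sqrt hs.ne').const_mul 2)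
    (by positivity)).const_add 1
  refine h.congr_deriv ?_
  field_simp
  rw [Real.sq_sqrt hs.le]
  ring

theorem hasDerivAt_sphereFactor (hr₁ : 0 < r₁) (hs : 0 < r₁ ^ 2 + s) :
    HasDerivAt (sphereFactor a r₁) (-sphereFactor a r₁ s / (2 * (r₁ ^ 2 + s))) s := by
  have hu : 0 < 2 * r₁ / (r₁ ^ 2 + s) := by positivity
  have hq : HasDerivAt (fun t => 2 * r₁ / (r₁ ^ 2 + t)) (-(2 * r₁) / (r₁ ^ 2 + s) ^ 2) s := by
    simpa [div_eq_mul_inv, neg_div] using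
      (((hasDerivAt_id s).const_add (r₁ ^ 2)).inv hs.ne').const_mul (2 * r₁)
  refine ((hq.sqrt hu.ne').const_mul (a ^ ((1 : ℝ) / 4))).congr_deriv ?_
  have hw : √(2 * r₁ / (r₁ ^ 2 + s)) ^ 2 * (r₁ ^ 2 + s) = 2 * r₁ := by
    rw [Real.sq_sqrt hu.le]; field_simp
  unfold sphereFactor
  field_simp
  linear_combination a ^ ((1 : ℝ) / 4) * hw

theorem contDiffAt_sphereFactor {n : WithTop ℕ∞} (hr₁ : r₁ ≠ 0) (hs : r₁ ^ 2 + s ≠ 0) :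
    ContDiffAt ℝ n (sphereFactor a r₁) s := by
  unfold sphereFactor
  have hu : 2 * r₁ / (r₁ ^ 2 + s) ≠ 0 := by simp [hr₁, hs]
  fun_prop (disch := assumption)

theorem sphereFactor_eq_schwarzschildFactor {r₀ : ℝ} (hm : 0 < m) (hr₀ : 0 < r₀) (hr₁ : 0 < r₁)
    (hr₁sq : r₁ ^ 2 = 2 * r₀ ^ 3 / m) (ha : a = (r₀ + m / 2) ^ 6 / (2 * m * r₀ ^ 3)) :
    sphereFactor a r₁ (r₀ ^ 2) = schwarzschildFactor m (r₀ ^ 2) := by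
  have hapos : 0 < a := ha ▸ by positivity
  have hsqrt_a : √a * r₁ = (r₀ + m / 2) ^ 3 / m := by
    rw [← Real.sqrt_sq hr₁.le, ← Real.sqrt_mul hapos.le, ha, hr₁sq,
      show (r₀ + m / 2) ^ 6 / (2 * m * r₀ ^ 3) * (2 * r₀ ^ 3 / m) = ((r₀ + m / 2) ^ 3 / m) ^ 2 by
        field_simp,
      Real.sqrt_sq (by positivity)]
  have hfourth : (a ^ ((1 : ℝ) / 4)) ^ 2 = √a := by
    rw [← Real.rpow_natCast, ← Real.rpow_mul hapos.le, Real.sqrt_eq_rpow]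
    norm_num
  unfold sphereFactor schwarzschildFactor
  rw [← pow_left_inj₀ (by positivity) (by positivity) two_ne_zero, mul_pow, hfourth,
    Real.sq_sqrt (by positivity), Real.sqrt_sq hr₀.le, mul_div_assoc', mul_left_comm, hsqrt_a,
    hr₁sq]
  field_simp

theorem deriv_sphereFactor_eq_deriv_schwarzschildFactor {r₀ : ℝ} (hm : 0 < m) (hr₀ : 0 < r₀)
    (hr₁ : 0 < r₁) (hr₁sq : r₁ ^ 2 = 2 * r₀ ^ 3 / m)
    (ha : a = (r₀ + m / 2) ^ 6 / (2 * m * r₀ ^ 3)) :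
    deriv (sphereFactor a r₁) (r₀ ^ 2) = deriv (schwarzschildFactor m) (r₀ ^ 2) := by
  rw [(hasDerivAt_sphereFactor hr₁ (by positivity)).deriv,
    (hasDerivAt_schwarzschildFactor (by positivity)).deriv,
    sphereFactor_eq_schwarzschildFactor hm hr₀ hr₁ hr₁sq ha, schwarzschildFactor,
    Real.sqrt_sq hr₀.le, hr₁sq]
  field_simp
  ring

end Factors

/-- The conformal factor of the static spherical liquid body of the Appendix,
matching a round 3-sphere of radius a^{1/2} to a Schwarzschild slice, is a
C¹ function on ℝ³. -/
theorem stmt15 (m r₀ : ℝ) (hm : 0 < m) (hr₀ : 0 < r₀)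
    (r₁ a : ℝ) (hr₁ : r₁ = Real.sqrt (2 * r₀ ^ 3 / m))
    (ha : a = (r₀ + m / 2) ^ 6 / (2 * m * r₀ ^ 3))
    (θ : EuclideanSpace ℝ (Fin 3) → ℝ)
    (hθ : ∀ x : EuclideanSpace ℝ (Fin 3),
      θ x = if r₀ ≤ ‖x‖ then 1 + m / (2 * ‖x‖)
        else a ^ ((1 : ℝ) / 4) * Real.sqrt (2 * r₁ / (r₁ ^ 2 + ‖x‖ ^ 2))) :
    ContDiff ℝ 1 θ := by
  have hr₁pos : 0 < r₁ := hr₁ ▸ Real.sqrt_pos.mpr (by positivity)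
  have hr₁sq : r₁ ^ 2 = 2 * r₀ ^ 3 / m := hr₁ ▸ Real.sq_sqrt (by positivity)
  have hθ_comp : θ = (fun s => if r₀ ^ 2 ≤ s then schwarzschildFactor m s else sphereFactor a r₁ s)
      ∘ fun x => ‖x‖ ^ 2 := by
    funext x
    simp [hθ, schwarzschildFactor, sphereFactor, sq_le_sq₀ hr₀.le (norm_nonneg x)]
  rw [hθ_comp, contDiff_iff_contDiffAt]
  intro x
  refine (contDiffAt_ite_le (fun _ => contDiffAt_sphereFactor hr₁pos.ne' (by positivity))
    (fun h => contDiffAt_schwarzschildFactor (lt_of_lt_of_le (by positivity) h))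
    (sphereFactor_eq_schwarzschildFactor hm hr₀ hr₁pos hr₁sq ha)
    (deriv_sphereFactor_eq_deriv_schwarzschildFactor hm hr₀ hr₁pos hr₁sq ha)).comp x
    (contDiff_norm_sq ℝ).contDiffAt
end
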